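/- arXiv:2508.12237 — 5 statements merged into one kernel-verified Lean document; each statement's English description precedes it below -/
import Mathlib

section
/- Let (R,𝔪,k) be a commutative noetherian local ring with depth R = 0 and R ≠ k (i.e., 𝔪 ≠ 0). If M is an R-module belonging to Add{Ω_R^n k | n ≥ 0}, then Soc R ⊆ Ann_R M. -/
/-!
Common definitions for formalizing (A)-, (B)-properties and (C)-relations
(Kosaka, "Characterizing regular local rings via analogues of (*)-properties").
-/

universe u v w

open IsLocalRing DirectSum TensorProduct

noncomputable section

/-- A bundled (possibly infinitely generated) module over the ring `R`. -/
structure ModuleAux (R : Type u) [CommRing R] where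
  carrier : Type v
  [isAddCommGroup : AddCommGroup carrier]
  [isModule : Module R carrier]

attribute [instance] ModuleAux.isAddCommGroup ModuleAux.isModule

/-- `depth R = 0` : every element of the maximal ideal is a zerodivisor. -/
def DepthZero (R : Type u) [CommRing R] [IsLocalRing R] : Prop :=
  ∀ x ∈ maximalIdeal R, x ∉ nonZeroDivisors R

/-- `depth R > 0` : the maximal ideal contains an `R`-regular element. -/
def DepthPos (R : Type u) [CommRing R] [IsLocalRing R] : Prop :=
  ∃ x ∈ maximalIdeal R, x ∈ nonZeroDivisors R

/-- The socle `Soc R = {r : R | 𝔪 r = 0}` of a local ring, as an ideal. -/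
def Socle (R : Type u) [CommRing R] [IsLocalRing R] : Ideal R :=
  (maximalIdeal R).annihilator

theorem span_singleton_ne_top {R : Type u} [CommRing R] [IsLocalRing R] {x : R}
    (hx : x ∈ maximalIdeal R) : Ideal.span {x} ≠ ⊤ := by
  intro h
  have hle : Ideal.span {x} ≤ maximalIdeal R := by
    rw [Ideal.span_le, Set.singleton_subset_iff]; exact hx
  rw [h] at hle
  exact (maximalIdeal.isMaximal R).ne_top (top_le_iff.mp hle)

/-- `R/xR` is a local ring whenever `x ∈ 𝔪`. -/
def quotIsLocalRing (R : Type u) [CommRing R] [IsLocalRing R] {x : R}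
    (hx : x ∈ maximalIdeal R) : IsLocalRing (R ⧸ Ideal.span {x}) :=
  letI := Ideal.Quotient.nontrivial_iff.mpr (span_singleton_ne_top hx)
  IsLocalRing.of_surjective' (Ideal.Quotient.mk _) Ideal.Quotient.mk_surjective

/-- A non-maximal prime ideal of a local ring. -/
def IsNonMaximalPrime (R : Type u) [CommRing R] [IsLocalRing R] (p : Ideal R) : Prop :=
  p.IsPrime ∧ p ≠ maximalIdeal R

/-- A property of (possibly infinitely generated) modules over noetherian local rings. -/
def ModuleProperty :=
  ∀ (R : Type u) [CommRing R] [IsNoetherianRing R] [IsLocalRing R]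
    (M : Type v) [AddCommGroup M] [Module R M], Prop

namespace ModuleProperty

/-- `M/xM` satisfies `P` as a module over `R/xR`. -/
def QuotSat (P : ModuleProperty.{u, v}) (R : Type u) [CommRing R] [IsNoetherianRing R]
    [IsLocalRing R] (M : Type v) [AddCommGroup M] [Module R M]
    {x : R} (hx : x ∈ maximalIdeal R) : Prop :=
  letI := quotIsLocalRing R hx
  P (R ⧸ Ideal.span {x}) (M ⧸ (Ideal.span {x} • ⊤ : Submodule R M))

/-- Condition (P1) : `P` descends along quotients by regular elements in `𝔪 \ 𝔪²`. -/
def SatP1 (P : ModuleProperty.{u, v}) : Prop :=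
  ∀ (R : Type u) [CommRing R] [IsNoetherianRing R] [IsLocalRing R]
    (M : Type v) [AddCommGroup M] [Module R M],
    P R M → ∀ (x : R) (hx : x ∈ maximalIdeal R), x ∉ maximalIdeal R ^ 2 →
      x ∈ nonZeroDivisors R → P.QuotSat R M hx

/-- Condition (P1') : if `depth R > 0` then, away from finitely many non-maximal primes,
`P` descends along quotients by regular elements in `𝔪 \ 𝔪²`. -/
def SatP1' (P : ModuleProperty.{u, v}) : Prop :=
  ∀ (R : Type u) [CommRing R] [IsNoetherianRing R] [IsLocalRing R]
    (M : Type v) [AddCommGroup M] [Module R M],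
    DepthPos R → P R M →
      ∃ s : Finset (Ideal R), (∀ p ∈ s, IsNonMaximalPrime R p) ∧
        ∀ (x : R) (hx : x ∈ maximalIdeal R), x ∉ maximalIdeal R ^ 2 →
          (∀ p ∈ s, x ∉ p) → x ∈ nonZeroDivisors R → P.QuotSat R M hx

/-- Condition (P2) : if `depth R = 0` and `M` satisfies `P`, then `Soc R ⊄ Ann_R M`. -/
def SatP2 (P : ModuleProperty.{u, v}) : Prop :=
  ∀ (R : Type u) [CommRing R] [IsNoetherianRing R] [IsLocalRing R]
    (M : Type v) [AddCommGroup M] [Module R M],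
    DepthZero R → P R M → ¬ Socle R ≤ Module.annihilator R M

/-- Condition (P3) : if `depth R = 0`, `M` satisfies `P` and `R ≠ k`,
then `Soc R ⊆ Ann_R M`. -/
def SatP3 (P : ModuleProperty.{u, v}) : Prop :=
  ∀ (R : Type u) [CommRing R] [IsNoetherianRing R] [IsLocalRing R]
    (M : Type v) [AddCommGroup M] [Module R M],
    DepthZero R → P R M → maximalIdeal R ≠ ⊥ → Socle R ≤ Module.annihilator R M

/-- Condition (*1) : `P` descends along quotients by `R`-regular elements. -/
def SatStar1 (P : ModuleProperty.{u, v}) : Prop :=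
  ∀ (R : Type u) [CommRing R] [IsNoetherianRing R] [IsLocalRing R]
    (M : Type v) [AddCommGroup M] [Module R M],
    P R M → ∀ (x : R) (hx : x ∈ maximalIdeal R), x ∈ nonZeroDivisors R → P.QuotSat R M hx

/-- Condition (*2) : if `depth R = 0` and `M` satisfies `P` then `Ann_R M = 0`. -/
def SatStar2 (P : ModuleProperty.{u, v}) : Prop :=
  ∀ (R : Type u) [CommRing R] [IsNoetherianRing R] [IsLocalRing R]
    (M : Type v) [AddCommGroup M] [Module R M],
    DepthZero R → P R M → Module.annihilator R M = ⊥

end ModuleProperty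

/-- An (A)-property: a property satisfying (P1) and (P2). -/
def IsAProperty (P : ModuleProperty.{u, v}) : Prop := P.SatP1 ∧ P.SatP2

/-- An (A')-property: a property satisfying (P1') and (P2). -/
def IsA'Property (P : ModuleProperty.{u, v}) : Prop := P.SatP1' ∧ P.SatP2

/-- A (B)-property: a property satisfying (P1) and (P3). -/
def IsBProperty (P : ModuleProperty.{u, v}) : Prop := P.SatP1 ∧ P.SatP3

/-- A (B')-property: a property satisfying (P1') and (P3). -/
def IsB'Property (P : ModuleProperty.{u, v}) : Prop := P.SatP1' ∧ P.SatP3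

/-- A (*)-property (for not necessarily finitely generated modules). -/
def IsStarProperty (P : ModuleProperty.{u, v}) : Prop := P.SatStar1 ∧ P.SatStar2

/-- `M ∈ 𝒫_{A'}(R)` : `M` satisfies some (A')-property over `R`. -/
def MemPA' (R : Type u) [CommRing R] [IsNoetherianRing R] [IsLocalRing R]
    (M : Type v) [AddCommGroup M] [Module R M] : Prop :=
  ∃ P : ModuleProperty.{u, v}, IsA'Property P ∧ P R M

/-- `M ∈ 𝒫_{B'}(R)` : `M` satisfies some (B')-property over `R`. -/
def MemPB' (R : Type u) [CommRing R] [IsNoetherianRing R] [IsLocalRing R]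
    (M : Type v) [AddCommGroup M] [Module R M] : Prop :=
  ∃ P : ModuleProperty.{u, v}, IsB'Property P ∧ P R M

/-- `M` satisfies some (*)-property over `R`. -/
def MemPStar (R : Type u) [CommRing R] [IsNoetherianRing R] [IsLocalRing R]
    (M : Type v) [AddCommGroup M] [Module R M] : Prop :=
  ∃ P : ModuleProperty.{u, v}, IsStarProperty P ∧ P R M

/-- A relation of (possibly infinitely generated) modules over noetherian local rings. -/
def ModuleRelation :=
  ∀ (R : Type u) [CommRing R] [IsNoetherianRing R] [IsLocalRing R]
    (M : Type v) [AddCommGroup M] [Module R M]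
    (N : Type v) [AddCommGroup N] [Module R N], Prop

namespace ModuleRelation

/-- `M/xM ≤_{R/xR} N/xN`. -/
def QuotRel (rel : ModuleRelation.{u, v}) (R : Type u) [CommRing R] [IsNoetherianRing R]
    [IsLocalRing R] (M : Type v) [AddCommGroup M] [Module R M]
    (N : Type v) [AddCommGroup N] [Module R N] {x : R} (hx : x ∈ maximalIdeal R) : Prop :=
  letI := quotIsLocalRing R hx
  rel (R ⧸ Ideal.span {x}) (M ⧸ (Ideal.span {x} • ⊤ : Submodule R M))
    (N ⧸ (Ideal.span {x} • ⊤ : Submodule R N))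

/-- Condition (R1). -/
def SatR1 (rel : ModuleRelation.{u, v}) : Prop :=
  ∀ (R : Type u) [CommRing R] [IsNoetherianRing R] [IsLocalRing R]
    (M : Type v) [AddCommGroup M] [Module R M] (N : Type v) [AddCommGroup N] [Module R N],
    rel R M N → ∀ (x : R) (hx : x ∈ maximalIdeal R), x ∉ maximalIdeal R ^ 2 →
      x ∈ nonZeroDivisors R → rel.QuotRel R M N hx

/-- Condition (R1'). -/
def SatR1' (rel : ModuleRelation.{u, v}) : Prop :=
  ∀ (R : Type u) [CommRing R] [IsNoetherianRing R] [IsLocalRing R]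
    (M : Type v) [AddCommGroup M] [Module R M] (N : Type v) [AddCommGroup N] [Module R N],
    DepthPos R → rel R M N →
      ∃ s : Finset (Ideal R), (∀ p ∈ s, IsNonMaximalPrime R p) ∧
        ∀ (x : R) (hx : x ∈ maximalIdeal R), x ∉ maximalIdeal R ^ 2 →
          (∀ p ∈ s, x ∉ p) → x ∈ nonZeroDivisors R → rel.QuotRel R M N hx

/-- Condition (R2). -/
def SatR2 (rel : ModuleRelation.{u, v}) : Prop :=
  ∀ (R : Type u) [CommRing R] [IsNoetherianRing R] [IsLocalRing R]
    (M : Type v) [AddCommGroup M] [Module R M] (N : Type v) [AddCommGroup N] [Module R N],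
    DepthZero R → rel R M N → Module.annihilator R M ≤ Module.annihilator R N

end ModuleRelation

/-- A (C)-relation: a relation satisfying (R1) and (R2). -/
def IsCRelation (rel : ModuleRelation.{u, v}) : Prop := rel.SatR1 ∧ rel.SatR2

/-- A (C')-relation: a relation satisfying (R1') and (R2). -/
def IsC'Relation (rel : ModuleRelation.{u, v}) : Prop := rel.SatR1' ∧ rel.SatR2

/-- `M ≼_R N` : `M ≤_R N` for some (C)-relation `≤`. -/
def Preceq (R : Type u) [CommRing R] [IsNoetherianRing R] [IsLocalRing R]
    (M : Type v) [AddCommGroup M] [Module R M]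
    (N : Type v) [AddCommGroup N] [Module R N] : Prop :=
  ∃ rel : ModuleRelation.{u, v}, IsCRelation rel ∧ rel R M N

/-- `M ≼'_R N` : `M ≤_R N` for some (C')-relation `≤`. -/
def Preceq' (R : Type u) [CommRing R] [IsNoetherianRing R] [IsLocalRing R]
    (M : Type v) [AddCommGroup M] [Module R M]
    (N : Type v) [AddCommGroup N] [Module R N] : Prop :=
  ∃ rel : ModuleRelation.{u, v}, IsC'Relation rel ∧ rel R M N

/-- A noetherian local ring is regular if its maximal ideal can be generated by
`dim R` elements. -/
def IsRegularLocal (R : Type u) [CommRing R] [IsLocalRing R] : Prop :=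
  ∃ (n : ℕ) (x : Fin n → R), Ideal.span (Set.range x) = maximalIdeal R ∧
    (n : WithBot (WithTop ℕ)) = ringKrullDim R

/-- `M` is (isomorphic to) the `n`-th syzygy `Ω_R^n k` of the residue field `k` in its
minimal free resolution: `Ω^0 k = k`, and `Ω^{n+1} k` is the kernel of a surjection
`F → Ω^n k` with `F` finitely generated free and the kernel contained in `𝔪 F`. -/
def IsSyzygy (R : Type u) [CommRing R] [IsLocalRing R] :
    ℕ → (M : Type v) → [AddCommGroup M] → [Module R M] → Prop
  | 0, M, _, _ => Nonempty (M ≃ₗ[R] ResidueField R)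
  | n + 1, M, _, _ =>
      ∃ (F : ModuleAux.{u, v} R) (S : Submodule R F.carrier),
        Module.Free R F.carrier ∧ Module.Finite R F.carrier ∧
        S ≤ maximalIdeal R • (⊤ : Submodule R F.carrier) ∧
        IsSyzygy R n (F.carrier ⧸ S) ∧ Nonempty (M ≃ₗ[R] S)

/-- `Y` is a direct summand of a direct sum of modules from the family `X`. -/
def IsAddIn (R : Type u) [CommRing R] (Y : Type v) [AddCommGroup Y] [Module R Y]
    {ι : Type w} (X : ι → ModuleAux.{u, v} R) : Prop :=
  ∃ (κ : Type v) (g : κ → ι)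
    (s : Y →ₗ[R] ⨁ k : κ, (X (g k)).carrier)
    (r : (⨁ k : κ, (X (g k)).carrier) →ₗ[R] Y), r ∘ₗ s = LinearMap.id

/-- `M ∈ Add {Ω_R^n k ∣ n ≥ 0}`. -/
def InAddSyzygies (R : Type u) [CommRing R] [IsLocalRing R]
    (M : Type v) [AddCommGroup M] [Module R M] : Prop :=
  ∃ (ι : Type v) (n : ι → ℕ) (Z : ι → ModuleAux.{u, v} R),
    (∀ i, IsSyzygy R (n i) (Z i).carrier) ∧ IsAddIn R M Z

/-- `M/xM ∈ Add {Ω_{R/xR}^n k ∣ n ≥ 0}` as a module over `R/xR`. -/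
def InAddSyzygiesQuot (R : Type u) [CommRing R] [IsLocalRing R]
    (M : Type v) [AddCommGroup M] [Module R M] {x : R} (hx : x ∈ maximalIdeal R) : Prop :=
  letI := quotIsLocalRing R hx
  InAddSyzygies (R ⧸ Ideal.span {x}) (M ⧸ (Ideal.span {x} • ⊤ : Submodule R M))

/-- `Y ∈ Add K` : `Y` is a direct summand of a direct sum of copies of `K`. -/
def IsSummandOfCopies (R : Type u) [CommRing R] (Y : Type v) [AddCommGroup Y] [Module R Y]
    (K : Type v) [AddCommGroup K] [Module R K] : Prop :=
  ∃ (κ : Type v) (s : Y →ₗ[R] (κ →₀ K)) (r : (κ →₀ K) →ₗ[R] Y), r ∘ₗ s = LinearMap.id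

/-- `M` is a faithfully flat `R`-module: `M` is flat and tensoring with `M`
reflects the vanishing of modules. -/
def IsFaithfullyFlat (R : Type u) [CommRing R] (M : Type v) [AddCommGroup M]
    [Module R M] : Prop :=
  Module.Flat R M ∧
    ∀ N : ModuleAux.{u, v} R, Subsingleton (M ⊗[R] N.carrier) → Subsingleton N.carrier

/-- A system of parameters of a local ring `R` : `dim R` elements of the maximal ideal
generating an `𝔪`-primary ideal. -/
def IsSOP (R : Type u) [CommRing R] [IsLocalRing R] {d : ℕ} (x : Fin d → R) : Prop :=
  (d : WithBot (WithTop ℕ)) = ringKrullDim R ∧ (∀ i, x i ∈ maximalIdeal R) ∧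
    (Ideal.span (Set.range x)).radical = maximalIdeal R

/-- `L` is a balanced big Cohen–Macaulay `R`-module: every system of parameters of `R`
is an `L`-regular sequence. -/
def IsBalancedBigCM (R : Type u) [CommRing R] [IsLocalRing R]
    (L : Type v) [AddCommGroup L] [Module R L] : Prop :=
  ∀ (d : ℕ) (x : Fin d → R), IsSOP R x → RingTheory.Sequence.IsRegular L (List.ofFn x)

/-- `L/xL` is a balanced big Cohen–Macaulay module over `R/xR`. -/
def IsBalancedBigCMQuot (R : Type u) [CommRing R] [IsLocalRing R]
    (L : Type v) [AddCommGroup L] [Module R L] {x : R} (hx : x ∈ maximalIdeal R) : Prop :=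
  letI := quotIsLocalRing R hx
  IsBalancedBigCM (R ⧸ Ideal.span {x}) (L ⧸ (Ideal.span {x} • ⊤ : Submodule R L))

/-- The depth of a module over a local ring: the supremum of the lengths of
`M`-regular sequences consisting of elements of the maximal ideal. -/
def moduleDepth (R : Type u) [CommRing R] [IsLocalRing R]
    (M : Type v) [AddCommGroup M] [Module R M] : ℕ∞ :=
  sSup {n : ℕ∞ | ∃ (d : ℕ) (x : Fin d → R), n = d ∧ (∀ i, x i ∈ maximalIdeal R) ∧
    RingTheory.Sequence.IsRegular M (List.ofFn x)}

/-- `K` is a deep module: `depth K ≥ depth R`. -/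
def IsDeep (R : Type u) [CommRing R] [IsLocalRing R]
    (K : Type v) [AddCommGroup K] [Module R K] : Prop :=
  moduleDepth R R ≤ moduleDepth R K

/-- `K/xK` is a deep module over `R/xR`. -/
def IsDeepQuot (R : Type u) [CommRing R] [IsLocalRing R]
    (K : Type v) [AddCommGroup K] [Module R K] {x : R} (hx : x ∈ maximalIdeal R) : Prop :=
  letI := quotIsLocalRing R hx
  IsDeep (R ⧸ Ideal.span {x}) (K ⧸ (Ideal.span {x} • ⊤ : Submodule R K))

/-- `L/xL ∈ Add (K/xK)` over `R/xR`. -/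
def IsSummandOfCopiesQuot (R : Type u) [CommRing R] [IsLocalRing R]
    (Y : Type v) [AddCommGroup Y] [Module R Y] (K : Type v) [AddCommGroup K] [Module R K]
    {x : R} (hx : x ∈ maximalIdeal R) : Prop :=
  IsSummandOfCopies (R ⧸ Ideal.span {x}) (Y ⧸ (Ideal.span {x} • ⊤ : Submodule R Y))
    (K ⧸ (Ideal.span {x} • ⊤ : Submodule R K))

/-- The map `M/IM → N/IN` induced by an `R`-linear map `f : M → N`. -/
def quotMapByIdeal {R : Type u} [CommRing R] (I : Ideal R) {M N : Type v}
    [AddCommGroup M] [Module R M] [AddCommGroup N] [Module R N] (f : M →ₗ[R] N) :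
    (M ⧸ (I • ⊤ : Submodule R M)) →ₗ[R] N ⧸ (I • ⊤ : Submodule R N) :=
  Submodule.mapQ _ _ f (Submodule.smul_top_le_comap_smul_top I f)

end

/-!
Since `Soc R · 𝔪 = 0`, the socle kills every submodule of `𝔪 F`, in particular every syzygy
`Ω^{n+1} k`; once `𝔪 ≠ 0` the socle lies in `𝔪`, so it also kills `Ω^0 k = k`. Annihilators
can only grow when passing to direct sums and direct summands.
-/

theorem socle_le_maximalIdeal {R : Type u} [CommRing R] [IsLocalRing R]
    (hm : maximalIdeal R ≠ ⊥) : Socle R ≤ maximalIdeal R :=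
  le_maximalIdeal fun h ↦ hm (Submodule.annihilator_eq_top_iff.mp h)

theorem Submodule.annihilator_le_annihilator_of_le_smul {R M : Type*} [CommRing R]
    [AddCommGroup M] [Module R M] {I : Ideal R} {N S : Submodule R M} (hS : S ≤ I • N) :
    I.annihilator ≤ S.annihilator := by
  refine le_annihilator_iff.mpr (le_bot_iff.mp ?_)
  calc I.annihilator • S ≤ I.annihilator • I • N := smul_mono_right _ hS
    _ = ⊥ := by rw [← Submodule.mul_smul, annihilator_mul, bot_smul]

theorem IsSyzygy.socle_le_annihilator {R : Type u} [CommRing R] [IsLocalRing R]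
    (hm : maximalIdeal R ≠ ⊥) {n : ℕ} {N : Type v} [AddCommGroup N] [Module R N]
    (h : IsSyzygy R n N) : Socle R ≤ Module.annihilator R N := by
  cases n with
  | zero =>
    obtain ⟨e⟩ := h
    rw [e.annihilator_eq]
    exact (socle_le_maximalIdeal hm).trans Ideal.annihilator_quotient.ge
  | succ n =>
    obtain ⟨F, S, -, -, hS, -, ⟨e⟩⟩ := h
    rw [e.annihilator_eq]
    exact Submodule.annihilator_le_annihilator_of_le_smul hS

theorem IsAddIn.le_annihilator {R : Type u} [CommRing R] {Y : Type v} [AddCommGroup Y]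
    [Module R Y] {ι : Type w} {X : ι → ModuleAux.{u, v} R} (hY : IsAddIn R Y X) {I : Ideal R}
    (hI : ∀ i, I ≤ Module.annihilator R (X i).carrier) : I ≤ Module.annihilator R Y := by
  obtain ⟨κ, g, s, r, hrs⟩ := hY
  have hs : Function.Injective s :=
    Function.LeftInverse.injective (g := r) fun y ↦ LinearMap.congr_fun hrs y
  calc I ≤ ⨅ k, Module.annihilator R (X (g k)).carrier := le_iInf fun k ↦ hI (g k)
    _ = Module.annihilator R (⨁ k, (X (g k)).carrier) := Module.annihilator_dfinsupp.symm
    _ ≤ Module.annihilator R Y := s.annihilator_le_of_injective hs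

theorem socle_le_annihilator_of_inAddSyzygies_general
    (R : Type u) [CommRing R] [IsLocalRing R]
    (hm : maximalIdeal R ≠ ⊥)
    (M : Type v) [AddCommGroup M] [Module R M] (hM : InAddSyzygies R M) :
    Socle R ≤ Module.annihilator R M := by
  obtain ⟨ι, n, Z, hZ, hAdd⟩ := hM
  exact hAdd.le_annihilator fun i ↦ (hZ i).socle_le_annihilator hm

/-- **Theorem (Statement 10).** Over a noetherian local ring of depth zero which is not
a field, every module in `Add {Ω_R^n k ∣ n ≥ 0}` is annihilated by the socle. -/
theorem socle_le_annihilator_of_inAddSyzygies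
    (R : Type u) [CommRing R] [IsNoetherianRing R] [IsLocalRing R]
    (h0 : DepthZero R) (hm : maximalIdeal R ≠ ⊥)
    (M : Type v) [AddCommGroup M] [Module R M] (hM : InAddSyzygies R M) :
    Socle R ≤ Module.annihilator R M :=
  socle_le_annihilator_of_inAddSyzygies_general R hm M hM
end

section
/- Let R be a commutative noetherian local ring and let X, Y be R-modules. If X ≼'_R Y and Y ∈ 𝒫_{A'}(R), then X ∈ 𝒫_{A'}(R). -/
/-!
Common definitions for formalizing (A)-, (B)-properties and (C)-relations
(Kosaka, "Characterizing regular local rings via analogues of (*)-properties").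
-/

universe u v w

open IsLocalRing DirectSum TensorProduct

/-!
Given a (C')-relation `≤` and an (A')-property `𝒫`, the property "`M ≤ N` for some `N ∈ 𝒫`"
is again an (A')-property, and `X` has it via `N = Y`. For (P1') one excludes the primes coming
from (R1') for `M ≤ N` together with those from (P1') for `N`; for (P2), `Soc R ⊆ Ann M ⊆ Ann N`
would contradict (P2) for `N`.
-/

def ModuleProperty.comap (P : ModuleProperty.{u, v}) (rel : ModuleRelation.{u, v}) :
    ModuleProperty.{u, v} :=
  fun S _ _ _ M _ _ => ∃ N : ModuleAux.{u, v} S, rel S M N.carrier ∧ P S N.carrier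

namespace ModuleProperty

variable {P : ModuleProperty.{u, v}} {rel : ModuleRelation.{u, v}}

theorem SatP1'.comap (hP : P.SatP1') (hrel : rel.SatR1') : (P.comap rel).SatP1' := by
  classical
  intro S _ _ _ M _ _ hdepth ⟨N, hMN, hN⟩
  obtain ⟨s, hs, hquot_rel⟩ := hrel S M N.carrier hdepth hMN
  obtain ⟨t, ht, hquot_P⟩ := hP S N.carrier hdepth hN
  refine ⟨s ∪ t, fun p hp => (Finset.mem_union.mp hp).elim (hs p) (ht p), ?_⟩
  intro x hx hx2 hxst hxreg
  exact ⟨⟨N.carrier ⧸ (Ideal.span {x} • ⊤ : Submodule S N.carrier)⟩,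
    hquot_rel x hx hx2 (fun p hp => hxst p (Finset.mem_union_left t hp)) hxreg,
    hquot_P x hx hx2 (fun p hp => hxst p (Finset.mem_union_right s hp)) hxreg⟩

theorem SatP2.comap (hP : P.SatP2) (hrel : rel.SatR2) : (P.comap rel).SatP2 :=
  fun S _ _ _ M _ _ hdepth ⟨N, hMN, hN⟩ hsoc =>
    hP S N.carrier hdepth hN (hsoc.trans (hrel S M N.carrier hdepth hMN))

end ModuleProperty

theorem IsA'Property.comap {P : ModuleProperty.{u, v}} {rel : ModuleRelation.{u, v}}
    (hP : IsA'Property P) (hrel : IsC'Relation rel) : IsA'Property (P.comap rel) :=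
  ⟨hP.1.comap hrel.1, hP.2.comap hrel.2⟩

/-- **Theorem (Statement 13).** If `X ≼'_R Y` and `Y ∈ 𝒫_{A'}(R)`, then `X ∈ 𝒫_{A'}(R)`. -/
theorem memPA'_of_preceq'
    (R : Type u) [CommRing R] [IsNoetherianRing R] [IsLocalRing R]
    (X : Type v) [AddCommGroup X] [Module R X]
    (Y : Type v) [AddCommGroup Y] [Module R Y]
    (hXY : Preceq' R X Y) (hY : MemPA' R Y) : MemPA' R X := by
  obtain ⟨rel, hrel, hXY⟩ := hXY
  obtain ⟨P, hP, hY⟩ := hY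
  exact ⟨P.comap rel, hP.comap hrel, ⟨Y⟩, hXY, hY⟩
end

section
/- Let R be a commutative noetherian local ring and let X, Y be R-modules. If X ≼'_R Y and X ∈ 𝒫_{B'}(R), then Y ∈ 𝒫_{B'}(R). -/
/-!
Common definitions for formalizing (A)-, (B)-properties and (C)-relations
(Kosaka, "Characterizing regular local rings via analogues of (*)-properties").
-/

universe u v w

open IsLocalRing DirectSum TensorProduct

/-!
If `≤` is a (C')-relation and `𝒫` a (B')-property, then "`N` lies above some module satisfying
`𝒫`" is again a (B')-property: in positive depth the exceptional primes of `𝒫` and of `≤` are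
pooled, and in depth zero `Soc R ⊆ Ann M ⊆ Ann N`. It holds for `Y` because
`X ≤ Y` and `X` satisfies `𝒫`.
-/

namespace ModuleProperty

def image (P : ModuleProperty.{u, v}) (rel : ModuleRelation.{u, v}) : ModuleProperty.{u, v} :=
  fun R _ _ _ N _ _ => ∃ M : ModuleAux.{u, v} R, P R M.carrier ∧ rel R M.carrier N

variable {P : ModuleProperty.{u, v}} {rel : ModuleRelation.{u, v}}

theorem SatP1'.image (hP : P.SatP1') (hrel : rel.SatR1') : (P.image rel).SatP1' := by
  intro R _ _ _ N _ _ hdepth ⟨M, hPM, hMN⟩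
  classical
  obtain ⟨s, hs, hPquot⟩ := hP R M.carrier hdepth hPM
  obtain ⟨t, ht, hrelquot⟩ := hrel R M.carrier N hdepth hMN
  refine ⟨s ∪ t, fun p hp => (Finset.mem_union.mp hp).elim (hs p) (ht p), ?_⟩
  intro x hx hx2 hxst hreg
  exact ⟨⟨M.carrier ⧸ (Ideal.span {x} • ⊤ : Submodule R M.carrier)⟩,
    hPquot x hx hx2 (fun p hp => hxst p (Finset.mem_union_left t hp)) hreg,
    hrelquot x hx hx2 (fun p hp => hxst p (Finset.mem_union_right s hp)) hreg⟩

theorem SatP3.image (hP : P.SatP3) (hrel : rel.SatR2) : (P.image rel).SatP3 :=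
  fun R _ _ _ N _ _ hdepth ⟨M, hPM, hMN⟩ hm =>
    (hP R M.carrier hdepth hPM hm).trans (hrel R M.carrier N hdepth hMN)

end ModuleProperty

theorem IsB'Property.image {P : ModuleProperty.{u, v}} {rel : ModuleRelation.{u, v}}
    (hP : IsB'Property P) (hrel : IsC'Relation rel) : IsB'Property (P.image rel) :=
  ⟨hP.1.image hrel.1, hP.2.image hrel.2⟩

/-- **Theorem (Statement 14).** If `X ≼'_R Y` and `X ∈ 𝒫_{B'}(R)`, then `Y ∈ 𝒫_{B'}(R)`. -/
theorem memPB'_of_preceq'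
    (R : Type u) [CommRing R] [IsNoetherianRing R] [IsLocalRing R]
    (X : Type v) [AddCommGroup X] [Module R X]
    (Y : Type v) [AddCommGroup Y] [Module R Y]
    (hXY : Preceq' R X Y) (hX : MemPB' R X) : MemPB' R Y := by
  obtain ⟨rel, hrel, hXY⟩ := hXY
  obtain ⟨P, hP, hPX⟩ := hX
  exact ⟨P.image rel, hP.image hrel, ⟨X⟩, hPX, hXY⟩
end

section
/- Let R be a commutative noetherian local ring and let X, Y, Z be R-modules. If X ≼'_R Y and Y ≼'_R Z, then X ≼'_R Z. -/
/-!
Common definitions for formalizing (A)-, (B)-properties and (C)-relations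
(Kosaka, "Characterizing regular local rings via analogues of (*)-properties").
-/

universe u v w

open IsLocalRing DirectSum TensorProduct

namespace ModuleRelation

def comp (rel₁ rel₂ : ModuleRelation.{u, v}) : ModuleRelation.{u, v} :=
  fun R _ _ _ M _ _ N _ _ => ∃ K : ModuleAux.{u, v} R, rel₁ R M K.carrier ∧ rel₂ R K.carrier N

theorem SatR1'.comp {rel₁ rel₂ : ModuleRelation.{u, v}} (h₁ : rel₁.SatR1') (h₂ : rel₂.SatR1') :
    (rel₁.comp rel₂).SatR1' := by
  classical
  rintro R _ _ _ M _ _ N _ _ hdepth ⟨K, hMK, hKN⟩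
  obtain ⟨s₁, hs₁, hquot₁⟩ := h₁ R M K.carrier hdepth hMK
  obtain ⟨s₂, hs₂, hquot₂⟩ := h₂ R K.carrier N hdepth hKN
  refine ⟨s₁ ∪ s₂, fun p hp => (Finset.mem_union.mp hp).elim (hs₁ p) (hs₂ p), ?_⟩
  intro x hx hx2 hxs hreg
  exact ⟨⟨K.carrier ⧸ (Ideal.span {x} • ⊤ : Submodule R K.carrier)⟩,
    hquot₁ x hx hx2 (fun p hp => hxs p (Finset.mem_union_left _ hp)) hreg,
    hquot₂ x hx hx2 (fun p hp => hxs p (Finset.mem_union_right _ hp)) hreg⟩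

theorem SatR2.comp {rel₁ rel₂ : ModuleRelation.{u, v}} (h₁ : rel₁.SatR2) (h₂ : rel₂.SatR2) :
    (rel₁.comp rel₂).SatR2 := by
  rintro R _ _ _ M _ _ N _ _ hdepth ⟨K, hMK, hKN⟩
  exact (h₁ R M K.carrier hdepth hMK).trans (h₂ R K.carrier N hdepth hKN)

end ModuleRelation

theorem IsC'Relation.comp {rel₁ rel₂ : ModuleRelation.{u, v}} (h₁ : IsC'Relation rel₁)
    (h₂ : IsC'Relation rel₂) : IsC'Relation (rel₁.comp rel₂) :=
  ⟨h₁.1.comp h₂.1, h₁.2.comp h₂.2⟩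

/-- **Theorem (Statement 15).** The relation `≼'` is transitive. -/
theorem preceq'_trans
    (R : Type u) [CommRing R] [IsNoetherianRing R] [IsLocalRing R]
    (X : Type v) [AddCommGroup X] [Module R X]
    (Y : Type v) [AddCommGroup Y] [Module R Y]
    (Z : Type v) [AddCommGroup Z] [Module R Z]
    (hXY : Preceq' R X Y) (hYZ : Preceq' R Y Z) : Preceq' R X Z := by
  obtain ⟨rel₁, hC₁, hXY⟩ := hXY
  obtain ⟨rel₂, hC₂, hYZ⟩ := hYZ
  exact ⟨rel₁.comp rel₂, hC₁.comp hC₂, ⟨Y⟩, hXY, hYZ⟩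
end

section
/- Let R be a commutative noetherian local ring, X an R-module, and {X_i}_{i∈I} a family of R-modules with I a finite index set. If X ≼'_R X_i for every i ∈ I and Y is an R-module belonging to Add{X_i | i ∈ I}, then X ≼'_R Y. -/
/-!
Common definitions for formalizing (A)-, (B)-properties and (C)-relations
(Kosaka, "Characterizing regular local rings via analogues of (*)-properties").
-/

universe u v w

open IsLocalRing DirectSum TensorProduct

/-!
The relation "`N ∈ Add {G₁, …, Gₙ}` for finitely many `Gᵢ` with `M ≼' Gᵢ`" is itself a
(C')-relation. For (R2), annihilators only grow under direct sums and direct summands.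
For (R1'), `Add` commutes with reduction modulo `x`, since `(⨁ Aₖ)/x(⨁ Aₖ) ≅ ⨁ Aₖ/xAₖ`, and
an element avoiding the finitely many primes attached to each of the finitely many relations
`M ≼' Gᵢ` works for all of them at once.
-/

section AddIn

variable {R : Type u} [CommRing R] {ι : Type w} {F : ι → ModuleAux.{u, v} R}
  {Y : Type v} [AddCommGroup Y] [Module R Y]

theorem isAddIn_directSum (κ : Type v) (g : κ → ι) :
    IsAddIn R (⨁ k, (F (g k)).carrier) F :=
  ⟨κ, g, .id, .id, rfl⟩

theorem IsAddIn.of_retract {Z : Type v} [AddCommGroup Z] [Module R Z]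
    (s : Y →ₗ[R] Z) (r : Z →ₗ[R] Y) (hrs : r ∘ₗ s = .id) (hZ : IsAddIn R Z F) :
    IsAddIn R Y F := by
  obtain ⟨κ, g, s', r', hrs'⟩ := hZ
  refine ⟨κ, g, s' ∘ₗ s, r ∘ₗ r', ?_⟩
  rw [LinearMap.comp_assoc, ← LinearMap.comp_assoc s, hrs', LinearMap.id_comp, hrs]

theorem IsAddIn.of_comp {ι' : Type*} {F' : ι' → ModuleAux.{u, v} R} (h : ι' → ι)
    (hF : F ∘ h = F') (hY : IsAddIn R Y F') : IsAddIn R Y F := by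
  subst hF
  obtain ⟨κ, g, s, r, hrs⟩ := hY
  exact ⟨κ, h ∘ g, s, r, hrs⟩

theorem IsAddIn.le_annihilator_s18 {J : Ideal R}
    (hJ : ∀ i, J ≤ Module.annihilator R (F i).carrier) (hY : IsAddIn R Y F) :
    J ≤ Module.annihilator R Y := by
  obtain ⟨κ, g, s, r, hrs⟩ := hY
  have hs : Function.Injective s :=
    Function.LeftInverse.injective (g := r) (LinearMap.congr_fun hrs)
  calc J ≤ ⨅ k, Module.annihilator R (F (g k)).carrier := le_iInf fun k => hJ (g k)
    _ = Module.annihilator R (⨁ k, (F (g k)).carrier) := Module.annihilator_dfinsupp.symm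
    _ ≤ Module.annihilator R Y := s.annihilator_le_of_injective hs

theorem quotMapByIdeal_comp (I : Ideal R) {M N P : Type v} [AddCommGroup M] [Module R M]
    [AddCommGroup N] [Module R N] [AddCommGroup P] [Module R P]
    (g : N →ₗ[R] P) (f : M →ₗ[R] N) :
    quotMapByIdeal I (g ∘ₗ f) = quotMapByIdeal I g ∘ₗ quotMapByIdeal I f :=
  Submodule.mapQ_comp _ _ _ _ _ _ _

theorem quotMapByIdeal_id (I : Ideal R) {M : Type v} [AddCommGroup M] [Module R M] :
    quotMapByIdeal I (LinearMap.id : M →ₗ[R] M) = .id :=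
  Submodule.mapQ_id _ _

open Classical in
noncomputable def directSumQuotSMulTopEquiv (I : Ideal R) {κ : Type v} (A : κ → Type v)
    [∀ k, AddCommGroup (A k)] [∀ k, Module R (A k)] :
    ((⨁ k, A k) ⧸ (I • ⊤ : Submodule R (⨁ k, A k))) ≃ₗ[R]
      ⨁ k, A k ⧸ (I • ⊤ : Submodule R (A k)) :=
  (quotTensorEquivQuotSMul _ I).symm ≪≫ₗ
    TensorProduct.directSumRight R R (R ⧸ I) A ≪≫ₗ
    DFinsupp.mapRange.linearEquiv fun k => quotTensorEquivQuotSMul (A k) I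

def ModuleAux.quotSMulTop (I : Ideal R) (G : ModuleAux.{u, v} R) : ModuleAux.{u, v} (R ⧸ I) :=
  ⟨G.carrier ⧸ (I • ⊤ : Submodule R G.carrier)⟩

theorem IsAddIn.quotient (I : Ideal R) (hY : IsAddIn R Y F) :
    IsAddIn (R ⧸ I) (Y ⧸ (I • ⊤ : Submodule R Y)) (ModuleAux.quotSMulTop I ∘ F) := by
  obtain ⟨κ, g, s, r, hrs⟩ := hY
  have hI : Function.Surjective (algebraMap R (R ⧸ I)) := Ideal.Quotient.mk_surjective
  let e := (directSumQuotSMulTopEquiv I fun k => (F (g k)).carrier).extendScalarsOfSurjective hI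
  have hD := isAddIn_directSum (F := ModuleAux.quotSMulTop I ∘ F) κ g
  refine .of_retract ((quotMapByIdeal I s).extendScalarsOfSurjective hI)
    ((quotMapByIdeal I r).extendScalarsOfSurjective hI) ?_
    (hD.of_retract e.toLinearMap e.symm.toLinearMap e.symm_comp)
  have h := congrArg (quotMapByIdeal I) hrs
  rw [quotMapByIdeal_comp, quotMapByIdeal_id] at h
  exact LinearMap.ext fun y => LinearMap.congr_fun h y

end AddIn

/-- Families are indexed by `Fin n`, not by an arbitrary finite type, so that the relation
lives in the universes of `ModuleRelation.{u, v}`. -/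
def preceq'AddClosure : ModuleRelation.{u, v} :=
  fun R _ _ _ M _ _ N _ _ => ∃ (n : ℕ) (G : Fin n → ModuleAux.{u, v} R),
    (∀ i, Preceq' R M (G i).carrier) ∧ IsAddIn R N G

theorem satR2_preceq'AddClosure : ModuleRelation.SatR2 preceq'AddClosure.{u, v} := by
  intro R _ _ _ M _ _ N _ _ hdepth ⟨n, G, hG, hN⟩
  refine hN.le_annihilator_s18 fun i => ?_
  obtain ⟨rel, hrel, hMG⟩ := hG i
  exact hrel.2 R M (G i).carrier hdepth hMG

theorem satR1'_preceq'AddClosure : ModuleRelation.SatR1' preceq'AddClosure.{u, v} := by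
  classical
  intro R _ _ _ M _ _ N _ _ hdepth ⟨n, G, hG, hN⟩
  choose rel hrel hMG using hG
  choose s hs hquot using fun i => (hrel i).1 R M (G i).carrier hdepth (hMG i)
  refine ⟨Finset.univ.biUnion s, fun p hp => ?_, fun x hx hx2 hxs hreg => ?_⟩
  · obtain ⟨i, -, hpi⟩ := Finset.mem_biUnion.mp hp
    exact hs i p hpi
  · refine ⟨n, ModuleAux.quotSMulTop _ ∘ G,
      fun i => ⟨rel i, hrel i, hquot i x hx hx2 (fun p hp => ?_) hreg⟩, hN.quotient _⟩
    exact hxs p (Finset.mem_biUnion.mpr ⟨i, Finset.mem_univ i, hp⟩)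

theorem isC'Relation_preceq'AddClosure : IsC'Relation preceq'AddClosure.{u, v} :=
  ⟨satR1'_preceq'AddClosure, satR2_preceq'AddClosure⟩

/-- **Theorem (Statement 18).** If `I` is finite, `X ≼'_R Xᵢ` for all `i ∈ I`, and
`Y ∈ Add {Xᵢ ∣ i ∈ I}`, then `X ≼'_R Y`. -/
theorem preceq'_of_isAddIn
    (R : Type u) [CommRing R] [IsNoetherianRing R] [IsLocalRing R]
    (X : Type v) [AddCommGroup X] [Module R X]
    (ι : Type w) [Finite ι] (F : ι → ModuleAux.{u, v} R)
    (hX : ∀ i : ι, Preceq' R X (F i).carrier)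
    (Y : Type v) [AddCommGroup Y] [Module R Y] (hY : IsAddIn R Y F) :
    Preceq' R X Y := by
  obtain ⟨n, ⟨e⟩⟩ := Finite.exists_equiv_fin ι
  refine ⟨preceq'AddClosure, isC'Relation_preceq'AddClosure, n, F ∘ e.symm, fun i => hX _, ?_⟩
  exact hY.of_comp e (by simp [Function.comp_assoc])
end
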